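/- arXiv:2506.07525 — 2 statements merged into one kernel-verified Lean document; each statement's English description precedes it below -/
import Mathlib

section
/- The map ψ(z,w) = (z + iw, [z − iw]) restricts to a bijection from the quadric Q = {(z,w) : z·z + w·w = 1} onto (ℂ^{d+1} × ℂP^d) ∖ H, where H = {(z,[w]) : z·w = 0}. -/
/-!
The substitution `u = z + iw`, `v = z - iw` is a linear automorphism of `ℂ^{d+1} × ℂ^{d+1}` with
`u·v = z·z + w·w`, so it carries `Q` onto `{(u, v) : u·v = 1}`. A point `(u, [v])` lies off `H`
exactly when `u` does not vanish on the line `[v]`, and then that line has exactly one vector `v`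
with `u·v = 1`.
-/

/-- The map ψ(z,w) = (z + iw, [z − iw]); where z − iw = 0 (which does not
happen on the quadric) we return an arbitrary projective point. -/
noncomputable def psiMap (d : ℕ)
    (p : (Fin (d+1) → ℂ) × (Fin (d+1) → ℂ)) :
    (Fin (d+1) → ℂ) × Projectivization ℂ (Fin (d+1) → ℂ) :=
  if h : p.1 - Complex.I • p.2 ≠ 0 then
    (p.1 + Complex.I • p.2, Projectivization.mk ℂ (p.1 - Complex.I • p.2) h)
  else
    (p.1 + Complex.I • p.2, Classical.choice inferInstance)

open Complex Matrix
open scoped LinearAlgebra.Projectivization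

namespace Projectivization

variable {K V : Type*} [Field K] [AddCommGroup V] [Module K V] (f : V →ₗ[K] K)

theorem map_ne_zero_of_mk_eq {v w : V} {hv : v ≠ 0} {hw : w ≠ 0}
    (h : mk K v hv = mk K w hw) (hfv : f v ≠ 0) : f w ≠ 0 := by
  obtain ⟨a, rfl⟩ := (mk_eq_mk_iff K v w hv hw).1 h
  simpa [Units.smul_def] using hfv

theorem eq_of_mk_eq_of_map_eq {v w : V} {hv : v ≠ 0} {hw : w ≠ 0}
    (h : mk K v hv = mk K w hw) (hfvw : f v = f w) (hfv : f v ≠ 0) : v = w := by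
  obtain ⟨a, rfl⟩ := (mk_eq_mk_iff' K v w hv hw).1 h
  have ha : a = 1 := by
    rw [map_smul, smul_eq_mul] at hfvw hfv
    exact (mul_eq_right₀ (right_ne_zero_of_mul hfv)).1 hfvw
  rw [ha, one_smul]

theorem exists_mk_eq_and_map_eq_one (q : ℙ K V) (hq : f q.rep ≠ 0) :
    ∃ (v : V) (hv : v ≠ 0), mk K v hv = q ∧ f v = 1 := by
  refine ⟨(f q.rep)⁻¹ • q.rep, smul_ne_zero (inv_ne_zero hq) q.rep_nonzero, ?_, ?_⟩
  · conv_rhs => rw [← q.mk_rep]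
    exact (mk_eq_mk_iff' K _ _ _ _).2 ⟨(f q.rep)⁻¹, rfl⟩
  · rw [map_smul, smul_eq_mul, inv_mul_cancel₀ hq]

end Projectivization

section ChangeOfVariables

variable {V : Type*} [AddCommGroup V] [Module ℂ V]

theorem eq_and_eq_of_add_I_smul_eq_of_sub_I_smul_eq {z w z' w' : V}
    (hadd : z + I • w = z' + I • w') (hsub : z - I • w = z' - I • w') : z = z' ∧ w = w' := by
  constructor
  · linear_combination (norm := module) (2⁻¹ : ℂ) • (hadd + hsub)
  · linear_combination (norm := module) (-I / 2) • (hadd - hsub) + I_sq • (w - w')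

theorem exists_add_I_smul_eq_and_sub_I_smul_eq (u v : V) :
    ∃ z w : V, z + I • w = u ∧ z - I • w = v :=
  ⟨(2⁻¹ : ℂ) • (u + v), (-I / 2) • (u - v),
    by linear_combination (norm := module) (-2⁻¹ : ℂ) • I_sq • (u - v),
    by linear_combination (norm := module) (2⁻¹ : ℂ) • I_sq • (u - v)⟩

end ChangeOfVariables

theorem add_I_smul_dotProduct_sub_I_smul {ι : Type*} [Fintype ι] (z w : ι → ℂ) :
    (z + I • w) ⬝ᵥ (z - I • w) = z ⬝ᵥ z + w ⬝ᵥ w := by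
  simp only [add_dotProduct, dotProduct_sub, dotProduct_smul, smul_dotProduct, dotProduct_comm w z,
    smul_eq_mul]
  linear_combination (-(w ⬝ᵥ w)) * I_sq

theorem sub_I_smul_ne_zero_of_dotProduct_self_add {ι : Type*} [Fintype ι] {z w : ι → ℂ}
    (h : z ⬝ᵥ z + w ⬝ᵥ w = 1) : z - I • w ≠ 0 := by
  intro h0
  rw [← add_I_smul_dotProduct_sub_I_smul, h0, dotProduct_zero] at h
  exact zero_ne_one h

theorem psiMap_of_dotProduct_self_add {d : ℕ} {z w : Fin (d + 1) → ℂ}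
    (h : z ⬝ᵥ z + w ⬝ᵥ w = 1) :
    psiMap d (z, w) =
      (z + I • w, Projectivization.mk ℂ (z - I • w) (sub_I_smul_ne_zero_of_dotProduct_self_add h)) :=
  dif_pos _

/-- ψ(z,w) = (z + iw, [z − iw]) restricts to a bijection from the quadric
Q = {z·z + w·w = 1} onto (ℂ^{d+1} × ℂP^d) ∖ H, H = {(z,[w]) : z·w = 0}. -/
theorem stmt9 (d : ℕ) :
    Set.BijOn (psiMap d)
      {p : (Fin (d+1) → ℂ) × (Fin (d+1) → ℂ) |
        ∑ k, p.1 k * p.1 k + ∑ k, p.2 k * p.2 k = 1}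
      ({p : (Fin (d+1) → ℂ) × Projectivization ℂ (Fin (d+1) → ℂ) |
        ∃ (w : Fin (d+1) → ℂ) (hw : w ≠ 0),
          p.2 = Projectivization.mk ℂ w hw ∧ ∑ k, p.1 k * w k = 0}ᶜ) := by
  refine ⟨?mapsTo, ?injOn, ?surjOn⟩
  case mapsTo =>
    rintro ⟨z, w⟩ hQ ⟨v, hv, hmk, hdot⟩
    rw [psiMap_of_dotProduct_self_add hQ] at hmk hdot
    have hpair : (z + I • w) ⬝ᵥ (z - I • w) = 1 := (add_I_smul_dotProduct_sub_I_smul z w).trans hQ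
    exact Projectivization.map_ne_zero_of_mk_eq (dotProductBilin ℂ ℂ (z + I • w)) hmk
      (ne_of_eq_of_ne hpair one_ne_zero) hdot
  case injOn =>
    rintro ⟨z, w⟩ hQ ⟨z', w'⟩ hQ' h
    rw [psiMap_of_dotProduct_self_add hQ, psiMap_of_dotProduct_self_add hQ'] at h
    obtain ⟨hadd, hmk⟩ := Prod.mk.inj h
    have hpair : (z + I • w) ⬝ᵥ (z - I • w) = 1 := (add_I_smul_dotProduct_sub_I_smul z w).trans hQ
    have hpair' : (z + I • w) ⬝ᵥ (z' - I • w') = 1 :=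
      hadd ▸ (add_I_smul_dotProduct_sub_I_smul z' w').trans hQ'
    have hsub := Projectivization.eq_of_mk_eq_of_map_eq (dotProductBilin ℂ ℂ (z + I • w)) hmk
      (hpair.trans hpair'.symm) (ne_of_eq_of_ne hpair one_ne_zero)
    obtain ⟨rfl, rfl⟩ := eq_and_eq_of_add_I_smul_eq_of_sub_I_smul_eq hadd hsub
    rfl
  case surjOn =>
    rintro ⟨u, q⟩ hH
    obtain ⟨v, hv, rfl, huv⟩ := Projectivization.exists_mk_eq_and_map_eq_one
      (dotProductBilin ℂ ℂ u) q fun h ↦ hH ⟨q.rep, q.rep_nonzero, q.mk_rep.symm, h⟩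
    obtain ⟨z, w, rfl, rfl⟩ := exists_add_I_smul_eq_and_sub_I_smul_eq u v
    have hQ : z ⬝ᵥ z + w ⬝ᵥ w = 1 := (add_I_smul_dotProduct_sub_I_smul z w).symm.trans huv
    exact ⟨(z, w), hQ, psiMap_of_dotProduct_self_add hQ⟩
end

section
/- The inverse of the map (q,p) ↦ (q/|q|, −|q| p) from Q = {|q|² = 1 + |p|², q·p = 0} to TS^{2d+1} = {|q'| = 1, q'·p' = 0} is given by (q',p') ↦ (√(1+|p'|²)·q', −p'/√(1+|p'|²)). -/
/-!
Write `s = ‖q‖` and `t = ‖p'‖`. On `Q` we have `s² = 1 + ‖p‖²`, and the image point has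
`‖p'‖ = s‖p‖`, so `s⁴ - s² = t²`. This quadratic in `s²` has exactly one positive root, hence
`s` (and with it `(q, p)`) is recovered from `(q', p')` by
`(q, p) = (s • q', -(s⁻¹ • p'))` with `s = √((1 + √(1 + 4t²)) / 2)`.
-/

open Set

noncomputable section

def liftScale (t : ℝ) : ℝ := √((1 + √(1 + 4 * t ^ 2)) / 2)

lemma liftScale_sq (t : ℝ) : liftScale t ^ 2 = (1 + √(1 + 4 * t ^ 2)) / 2 :=
  Real.sq_sqrt (by positivity)

lemma one_le_liftScale (t : ℝ) : 1 ≤ liftScale t := by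
  have : 1 ≤ √(1 + 4 * t ^ 2) := Real.one_le_sqrt.mpr (le_add_of_nonneg_right (by positivity))
  exact Real.one_le_sqrt.mpr (by linarith)

lemma liftScale_pos (t : ℝ) : 0 < liftScale t :=
  zero_lt_one.trans_le (one_le_liftScale t)

lemma liftScale_sq_mul_sq_sub_one (t : ℝ) :
    liftScale t ^ 2 * (liftScale t ^ 2 - 1) = t ^ 2 := by
  have h := Real.sq_sqrt (show 0 ≤ 1 + 4 * t ^ 2 by positivity)
  rw [liftScale_sq]
  linear_combination h / 4

lemma liftScale_eq_of_sq_mul_sq_sub_one {s t : ℝ} (hs : 0 < s)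
    (h : s ^ 2 * (s ^ 2 - 1) = t ^ 2) : liftScale t = s := by
  have hs1 : 1 ≤ s ^ 2 := by
    by_contra! hlt
    nlinarith [mul_pos (pow_pos hs 2) (sub_pos.2 hlt), sq_nonneg t]
  have hroot : √(1 + 4 * t ^ 2) = 2 * s ^ 2 - 1 := by
    rw [Real.sqrt_eq_iff_eq_sq (by positivity) (by linarith)]
    linear_combination -4 * h
  rw [liftScale, hroot, show (1 + (2 * s ^ 2 - 1)) / 2 = s ^ 2 by ring]
  exact Real.sqrt_sq hs.le

variable {E : Type*} [NormedAddCommGroup E] [InnerProductSpace ℝ E]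

variable (E) in
def hyperboloidBundle : Set (E × E) :=
  {x | ‖x.1‖ ^ 2 = 1 + ‖x.2‖ ^ 2 ∧ inner ℝ x.1 x.2 = (0 : ℝ)}

variable (E) in
def sphereTangentBundle : Set (E × E) :=
  {y | ‖y.1‖ = 1 ∧ inner ℝ y.1 y.2 = (0 : ℝ)}

def toSphereTangent (x : E × E) : E × E :=
  (‖x.1‖⁻¹ • x.1, -(‖x.1‖ • x.2))

def ofSphereTangent (y : E × E) : E × E :=
  (liftScale ‖y.2‖ • y.1, -((liftScale ‖y.2‖)⁻¹ • y.2))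

lemma inner_smul_neg_smul_eq_zero {u v : E} (h : inner ℝ u v = (0 : ℝ)) (a b : ℝ) :
    inner ℝ (a • u) (-(b • v)) = (0 : ℝ) := by
  rw [inner_neg_right, real_inner_smul_left, real_inner_smul_right, h]
  ring

lemma one_le_norm_fst_of_mem_hyperboloidBundle {x : E × E} (hx : x ∈ hyperboloidBundle E) :
    1 ≤ ‖x.1‖ := by
  nlinarith [hx.1, norm_nonneg x.1, sq_nonneg ‖x.2‖]

lemma mapsTo_toSphereTangent :
    MapsTo toSphereTangent (hyperboloidBundle E) (sphereTangentBundle E) := by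
  intro x hx
  have hq : ‖x.1‖ ≠ 0 := (zero_lt_one.trans_le (one_le_norm_fst_of_mem_hyperboloidBundle hx)).ne'
  refine ⟨?_, inner_smul_neg_smul_eq_zero hx.2 _ _⟩
  rw [toSphereTangent, norm_smul, norm_inv, norm_norm, inv_mul_cancel₀ hq]

lemma mapsTo_ofSphereTangent :
    MapsTo ofSphereTangent (sphereTangentBundle E) (hyperboloidBundle E) := by
  intro y hy
  have hs := liftScale_pos ‖y.2‖
  refine ⟨?_, inner_smul_neg_smul_eq_zero hy.2 _ _⟩
  have key := liftScale_sq_mul_sq_sub_one ‖y.2‖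
  simp only [ofSphereTangent, norm_neg, norm_smul, norm_inv, Real.norm_of_nonneg hs.le, hy.1]
  field_simp
  linear_combination key

lemma leftInvOn_ofSphereTangent :
    LeftInvOn ofSphereTangent toSphereTangent (hyperboloidBundle E) := by
  intro x hx
  have hq := zero_lt_one.trans_le (one_le_norm_fst_of_mem_hyperboloidBundle hx)
  have hscale : liftScale ‖‖x.1‖ • x.2‖ = ‖x.1‖ := by
    refine liftScale_eq_of_sq_mul_sq_sub_one hq ?_
    rw [norm_smul, norm_norm]
    linear_combination ‖x.1‖ ^ 2 * hx.1
  simp only [toSphereTangent, ofSphereTangent, norm_neg, hscale, smul_neg, neg_neg, smul_smul,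
    mul_inv_cancel₀ hq.ne', inv_mul_cancel₀ hq.ne', one_smul]

lemma leftInvOn_toSphereTangent :
    LeftInvOn toSphereTangent ofSphereTangent (sphereTangentBundle E) := by
  intro y hy
  have hs := (liftScale_pos ‖y.2‖).ne'
  have hnorm : ‖liftScale ‖y.2‖ • y.1‖ = liftScale ‖y.2‖ := by
    rw [norm_smul, hy.1, mul_one, Real.norm_of_nonneg (liftScale_pos _).le]
  simp only [toSphereTangent, ofSphereTangent, hnorm, smul_neg, neg_neg, smul_smul,
    mul_inv_cancel₀ hs, inv_mul_cancel₀ hs, one_smul]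

theorem bijOn_toSphereTangent :
    BijOn toSphereTangent (hyperboloidBundle E) (sphereTangentBundle E) :=
  InvOn.bijOn ⟨leftInvOn_ofSphereTangent, leftInvOn_toSphereTangent⟩
    mapsTo_toSphereTangent mapsTo_ofSphereTangent

end

/-- The map (q,p) ↦ (q/|q|, −|q|p) from Q = {|q|² = 1 + |p|², q·p = 0} to
TS^{2d+1} = {|q'| = 1, q'·p' = 0} is bijective: it maps Q into TS^{2d+1},
is injective on Q, and every point of TS^{2d+1} has a (unique) preimage in Q. -/
theorem stmt12 (d : ℕ) :
    Set.MapsTo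
      (fun p : EuclideanSpace ℝ (Fin (2*d+2)) × EuclideanSpace ℝ (Fin (2*d+2)) =>
        (‖p.1‖⁻¹ • p.1, -(‖p.1‖ • p.2)))
      {p : EuclideanSpace ℝ (Fin (2*d+2)) × EuclideanSpace ℝ (Fin (2*d+2)) |
        ‖p.1‖ ^ 2 = 1 + ‖p.2‖ ^ 2 ∧ inner ℝ p.1 p.2 = (0 : ℝ)}
      {p : EuclideanSpace ℝ (Fin (2*d+2)) × EuclideanSpace ℝ (Fin (2*d+2)) |
        ‖p.1‖ = 1 ∧ inner ℝ p.1 p.2 = (0 : ℝ)} ∧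
    Set.InjOn
      (fun p : EuclideanSpace ℝ (Fin (2*d+2)) × EuclideanSpace ℝ (Fin (2*d+2)) =>
        (‖p.1‖⁻¹ • p.1, -(‖p.1‖ • p.2)))
      {p : EuclideanSpace ℝ (Fin (2*d+2)) × EuclideanSpace ℝ (Fin (2*d+2)) |
        ‖p.1‖ ^ 2 = 1 + ‖p.2‖ ^ 2 ∧ inner ℝ p.1 p.2 = (0 : ℝ)} ∧
    Set.SurjOn
      (fun p : EuclideanSpace ℝ (Fin (2*d+2)) × EuclideanSpace ℝ (Fin (2*d+2)) =>
        (‖p.1‖⁻¹ • p.1, -(‖p.1‖ • p.2)))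
      {p : EuclideanSpace ℝ (Fin (2*d+2)) × EuclideanSpace ℝ (Fin (2*d+2)) |
        ‖p.1‖ ^ 2 = 1 + ‖p.2‖ ^ 2 ∧ inner ℝ p.1 p.2 = (0 : ℝ)}
      {p : EuclideanSpace ℝ (Fin (2*d+2)) × EuclideanSpace ℝ (Fin (2*d+2)) |
        ‖p.1‖ = 1 ∧ inner ℝ p.1 p.2 = (0 : ℝ)} :=
  bijOn_toSphereTangent
end
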